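/- (Multicalibration restricts to subsets) If the partition S is α-approximately multicalibrated for C under D in the sense Σ_i |E_D[1_{S_i}(x)·c(x)·(y − p_i)]| ≤ α for all c ∈ C, and C contains the indicator of X' ⊆ X and is closed under multiplication by this indicator, then the restricted partition S'_i = S_i ∩ X' is α'-approximately multicalibrated for the restricted class under D' = D | (x ∈ X'), with α' = (1 + ‖C‖_∞)·α / D(X'). -/

import Mathlib

/-!
Calibration errors are affine in the prediction: moving the prediction of state `i` from `p_i`
to `p'_i` changes `E_D[1_{S_i} c' (y - ·)]` by `(p_i - p'_i) E_D[1_{S_i} c']`, and for `c'`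
supported on `X'` this is at most `‖C‖_∞ |p'_i - p_i| D(S_i ∩ X')`. That last quantity is exactly
the calibration error of the indicator of `X'` at `p_i`, which the hypothesis controls. Summing
over states bounds the unnormalised errors by `(1 + ‖C‖_∞) α`; conditioning on `X'` divides by
`D(X')`.
-/

open Finset

variable {X : Type*} [Fintype X] [DecidableEq X] {m : ℕ}

/-- Probability mass `D(S_i)` of state `i` of the partition given by `σ`. -/
noncomputable def smass (D : X → Bool → ℝ) (σ : X → Fin m) (i : Fin m) : ℝ :=
  ∑ x, ∑ b, if σ x = i then D x b else 0

/-- `p_i = E_{D_i}[y]`. -/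
noncomputable def pstate (D : X → Bool → ℝ) (σ : X → Fin m) (i : Fin m) : ℝ :=
  (∑ x, if σ x = i then D x true else 0) / smass D σ i

/-- `E_D[1_{S_i}(x)·c(x)·(y − q)]`. -/
noncomputable def calTerm (D : X → Bool → ℝ) (σ : X → Fin m) (i : Fin m)
    (c : X → ℝ) (q : ℝ) : ℝ :=
  ∑ x, ∑ b, if σ x = i then D x b * c x * ((if b then 1 else 0) - q) else 0

/-- Mass of `S_i ∩ X'`. -/
noncomputable def massInt (D : X → Bool → ℝ) (σ : X → Fin m) (X' : Finset X)
    (i : Fin m) : ℝ :=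
  ∑ x, ∑ b, if σ x = i ∧ x ∈ X' then D x b else 0

/-- `p'_i = E[y | x ∈ S_i ∩ X']`. -/
noncomputable def pstateInt (D : X → Bool → ℝ) (σ : X → Fin m) (X' : Finset X)
    (i : Fin m) : ℝ :=
  (∑ x, if σ x = i ∧ x ∈ X' then D x true else 0) / massInt D σ X' i

/-- `E_{D'}[1_{S'_i}(x)·c'(x)·(y − q)]` where `D' = D | (x ∈ X')` and `S'_i = S_i ∩ X'`. -/
noncomputable def calTermInt (D : X → Bool → ℝ) (σ : X → Fin m) (X' : Finset X)
    (i : Fin m) (c : X → ℝ) (q : ℝ) : ℝ :=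
  (∑ x, ∑ b, if σ x = i ∧ x ∈ X' then D x b * c x * ((if b then 1 else 0) - q) else 0)
    / (∑ x ∈ X', ∑ b, D x b)

noncomputable def stateIntegral (D : X → Bool → ℝ) (σ : X → Fin m) (i : Fin m) (c : X → ℝ) : ℝ :=
  ∑ x, ∑ b, if σ x = i then D x b * c x else 0

omit [DecidableEq X] in
lemma calTerm_eq_add (D : X → Bool → ℝ) (σ : X → Fin m) (i : Fin m) (c : X → ℝ) (p q : ℝ) :
    calTerm D σ i c q = calTerm D σ i c p + (p - q) * stateIntegral D σ i c := by
  simp only [calTerm, stateIntegral, mul_sum, ← sum_add_distrib]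
  refine sum_congr rfl fun x _ => sum_congr rfl fun b _ => ?_
  split_ifs <;> ring

lemma massInt_nonneg {D : X → Bool → ℝ} (hD : ∀ x b, 0 ≤ D x b) (σ : X → Fin m)
    (X' : Finset X) (i : Fin m) : 0 ≤ massInt D σ X' i :=
  sum_nonneg fun x _ => sum_nonneg fun b _ => by split_ifs <;> simp [hD]

lemma pstateInt_mul_massInt {D : X → Bool → ℝ} (hD : ∀ x b, 0 ≤ D x b) (σ : X → Fin m)
    (X' : Finset X) (i : Fin m) :
    pstateInt D σ X' i * massInt D σ X' i =
      ∑ x, if σ x = i ∧ x ∈ X' then D x true else 0 := by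
  refine div_mul_cancel_of_imp fun hzero => le_antisymm ?_ ?_
  · calc (∑ x, if σ x = i ∧ x ∈ X' then D x true else 0) ≤ massInt D σ X' i :=
          sum_le_sum fun x _ => by
            split_ifs <;> simp [hD]
      _ = 0 := hzero
  · exact sum_nonneg fun x _ => by split_ifs <;> simp [hD]

lemma calTerm_indicator {D : X → Bool → ℝ} (hD : ∀ x b, 0 ≤ D x b) (σ : X → Fin m)
    (X' : Finset X) (i : Fin m) (q : ℝ) :
    calTerm D σ i (fun x => if x ∈ X' then 1 else 0) q =
      (pstateInt D σ X' i - q) * massInt D σ X' i := by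
  rw [sub_mul, pstateInt_mul_massInt hD, massInt, mul_sum, ← sum_sub_distrib]
  refine sum_congr rfl fun x _ => ?_
  by_cases hx : x ∈ X' <;> by_cases hσ : σ x = i <;> simp [hx, hσ]
  ring

lemma abs_stateIntegral_le {D : X → Bool → ℝ} (hD : ∀ x b, 0 ≤ D x b) (σ : X → Fin m)
    {X' : Finset X} (i : Fin m) {c : X → ℝ} {K : ℝ} (hsupp : ∀ x, x ∉ X' → c x = 0)
    (hc : ∀ x, |c x| ≤ K) :
    |stateIntegral D σ i c| ≤ K * massInt D σ X' i := by
  calc |stateIntegral D σ i c|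
      ≤ ∑ x, ∑ b, |if σ x = i then D x b * c x else 0| :=
        (abs_sum_le_sum_abs _ _).trans (sum_le_sum fun x _ => abs_sum_le_sum_abs _ _)
    _ ≤ ∑ x, ∑ b, K * if σ x = i ∧ x ∈ X' then D x b else 0 :=
        sum_le_sum fun x _ => sum_le_sum fun b _ => by
          by_cases hx : x ∈ X' <;> by_cases hσ : σ x = i <;>
            simp [hx, hσ, hsupp, abs_mul, abs_of_nonneg (hD x b)]
          exact (mul_comm _ _).trans_le (mul_le_mul_of_nonneg_right (hc x) (hD x b))
    _ = K * massInt D σ X' i := by simp only [massInt, mul_sum]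

lemma calTermInt_eq_div {D : X → Bool → ℝ} (σ : X → Fin m) {X' : Finset X} (i : Fin m)
    {c : X → ℝ} (hsupp : ∀ x, x ∉ X' → c x = 0) (q : ℝ) :
    calTermInt D σ X' i c q = calTerm D σ i c q / ∑ x ∈ X', ∑ b, D x b := by
  rw [calTermInt, calTerm]
  congr 1
  refine sum_congr rfl fun x _ => sum_congr rfl fun b _ => ?_
  by_cases hx : x ∈ X' <;> simp [hx, hsupp]

lemma abs_calTerm_pstateInt_le {D : X → Bool → ℝ} (hD : ∀ x b, 0 ≤ D x b) (σ : X → Fin m)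
    {X' : Finset X} (i : Fin m) {c : X → ℝ} {K : ℝ} (hsupp : ∀ x, x ∉ X' → c x = 0)
    (hc : ∀ x, |c x| ≤ K) (p : ℝ) :
    |calTerm D σ i c (pstateInt D σ X' i)| ≤
      |calTerm D σ i c p| + K * |calTerm D σ i (fun x => if x ∈ X' then 1 else 0) p| := by
  rw [calTerm_eq_add D σ i c p, calTerm_indicator hD, abs_mul, abs_sub_comm,
    abs_of_nonneg (massInt_nonneg hD σ X' i)]
  calc |calTerm D σ i c p + (p - pstateInt D σ X' i) * stateIntegral D σ i c|
      ≤ |calTerm D σ i c p| + |p - pstateInt D σ X' i| * |stateIntegral D σ i c| :=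
        (abs_add_le _ _).trans_eq (by rw [abs_mul])
    _ ≤ |calTerm D σ i c p| + |p - pstateInt D σ X' i| * (K * massInt D σ X' i) := by
        gcongr
        exact abs_stateIntegral_le hD σ i hsupp hc
    _ = _ := by ring

theorem multicalibration_restricts_general {X : Type*} [Fintype X] [DecidableEq X] {m : ℕ}
    (D : X → Bool → ℝ) (hD : ∀ x b, 0 ≤ D x b)
    (σ : X → Fin m) (C : Set (X → ℝ)) (α Cinf : ℝ) (X' : Finset X)
    (hmc : ∀ c ∈ C, ∑ i, |calTerm D σ i c (pstate D σ i)| ≤ α)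
    (hind : (fun x => if x ∈ X' then (1:ℝ) else 0) ∈ C)
    (hbound : ∀ c ∈ C, ∀ x, |c x| ≤ Cinf)
    (hpos : 0 < ∑ x ∈ X', ∑ b, D x b) :
    ∀ c' ∈ C, (∀ x, x ∉ X' → c' x = 0) →
      ∑ i, |calTermInt D σ X' i c' (pstateInt D σ X' i)|
        ≤ (1 + Cinf) * α / (∑ x ∈ X', ∑ b, D x b) := by
  intro c' hc' hsupp
  obtain ⟨x₀, -⟩ := nonempty_of_sum_ne_zero hpos.ne'
  have hCinf : 0 ≤ Cinf := (abs_nonneg _).trans (hbound c' hc' x₀)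
  have hunnormalised : ∑ i, |calTerm D σ i c' (pstateInt D σ X' i)| ≤ (1 + Cinf) * α :=
    calc ∑ i, |calTerm D σ i c' (pstateInt D σ X' i)|
        ≤ ∑ i, |calTerm D σ i c' (pstate D σ i)| +
            Cinf * ∑ i, |calTerm D σ i (fun x => if x ∈ X' then 1 else 0) (pstate D σ i)| := by
          rw [mul_sum, ← sum_add_distrib]
          exact sum_le_sum fun i _ =>
            abs_calTerm_pstateInt_le hD σ i hsupp (hbound c' hc') (pstate D σ i)
      _ ≤ α + Cinf * α := by gcongr <;> exact hmc _ ‹_›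
      _ = (1 + Cinf) * α := by ring
  simp only [calTermInt_eq_div σ _ hsupp, abs_div, abs_of_pos hpos, ← sum_div]
  gcongr

/-- Multicalibration restricts to subsets: if `S` is `α`-approximately multicalibrated for a
class `C` containing the indicator of `X'` and closed under multiplication by it, then the
restricted partition `S_i ∩ X'` is `(1+‖C‖_∞)α/D(X')`-approximately multicalibrated under
`D' = D | (x ∈ X')` for every `c' ∈ C` supported on `X'`. -/
theorem multicalibration_restricts {X : Type*} [Fintype X] [DecidableEq X] {m : ℕ}
    (D : X → Bool → ℝ) (hD : ∀ x b, 0 ≤ D x b) (hD1 : ∑ x, ∑ b, D x b = 1)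
    (σ : X → Fin m) (C : Set (X → ℝ)) (α Cinf : ℝ) (X' : Finset X)
    (hmc : ∀ c ∈ C, ∑ i, |calTerm D σ i c (pstate D σ i)| ≤ α)
    (hind : (fun x => if x ∈ X' then (1:ℝ) else 0) ∈ C)
    (hclosed : ∀ c ∈ C, (fun x => (if x ∈ X' then (1:ℝ) else 0) * c x) ∈ C)
    (hbound : ∀ c ∈ C, ∀ x, |c x| ≤ Cinf)
    (hpos : 0 < ∑ x ∈ X', ∑ b, D x b) :
    ∀ c' ∈ C, (∀ x, x ∉ X' → c' x = 0) →
      ∑ i, |calTermInt D σ X' i c' (pstateInt D σ X' i)|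
        ≤ (1 + Cinf) * α / (∑ x ∈ X', ∑ b, D x b) :=
  multicalibration_restricts_general D hD σ C α Cinf X' hmc hind hbound hpos
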